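/- Let $n\geq 3$ and let $\mathcal{L}_S$ be the $n\times n$ matrix with diagonal $\frac{4}{3}$, super/sub-diagonal $-\frac{1}{3}$, and corners $+\frac{1}{3}$. All eigenvalues $\delta_1,\dots,\delta_n$ are positive and $\sum_{i=1}^{n}\frac{1}{\delta_i}=\frac{\sqrt{3}\,n}{2}\cdot\frac{(2+\sqrt{3})^{n}-(2-\sqrt{3})^{n}}{(2+\sqrt{3})^{n}+(2-\sqrt{3})^{n}+2}$. -/

import Mathlib

/-!
Write `P` for the negacyclic shift (`P ^ n = -1`, `Pᵀ = P⁻¹`), so that `𝓛_S = (4 - P - Pᵀ) / 3`.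
Positivity follows from `4 - P - Pᵀ = 2 + (1 - P)ᵀ (1 - P)`. For the trace of the inverse, write
`4 = q + q⁻¹` with `q = 2 - √3`; then `4 - P - P⁻¹ = -P⁻¹ (1 - q P) (1 - q⁻¹ P)`, and since
`P ^ n = -1` each factor `1 - t P` is inverted, up to the scalar `1 + t ^ n`, by the finite
geometric series `∑_{k<n} (t P) ^ k`. The resulting explicit inverse is a combination of the
powers `P ^ k`, `k < n`, of which only `P ^ 0` has nonzero trace.
-/

/-- The matrix `𝓛_S`: diagonal `4/3`, subdiagonal and superdiagonal `-1/3`,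
corner entries `+1/3` at positions `(1,n)` and `(n,1)`. -/
noncomputable def LSnorm (n : ℕ) : Matrix (Fin n) (Fin n) ℝ :=
  Matrix.of fun i j =>
    if i = j then 4 / 3
    else if i.val + 1 = j.val ∨ j.val + 1 = i.val then -(1 / 3)
    else if (i.val = 0 ∧ j.val = n - 1) ∨ (i.val = n - 1 ∧ j.val = 0) then 1 / 3
    else 0

open Matrix Finset

theorem Matrix.IsHermitian.trace_cfc {n 𝕜 : Type*} [RCLike 𝕜] [Fintype n] [DecidableEq n]
    {A : Matrix n n 𝕜} (hA : A.IsHermitian) (f : ℝ → ℝ) :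
    (cfc f A).trace = ∑ i, (f (hA.eigenvalues i) : 𝕜) := by
  rw [hA.cfc_eq, IsHermitian.cfc, Unitary.conjStarAlgAut_apply, trace_mul_cycle,
    Unitary.coe_star_mul_self, one_mul, trace_diagonal]
  rfl

theorem Matrix.IsHermitian.trace_inv {n 𝕜 : Type*} [RCLike 𝕜] [Fintype n] [DecidableEq n]
    {A : Matrix n n 𝕜} (hA : A.IsHermitian) (h : IsUnit A) :
    A⁻¹.trace = ∑ i, ((hA.eigenvalues i)⁻¹ : 𝕜) := by
  rw [nonsing_inv_eq_ringInverse, ← cfc_ringInverse_id (R := ℝ) _ h hA.isSelfAdjoint,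
    hA.trace_cfc]
  simp

section Resolvent

variable {K A : Type*} [Field K] [Ring A] [Algebra K A] {x : A} {n : ℕ}

theorem one_sub_smul_mul_geom_sum_of_pow_eq_neg_one (hx : x ^ n = -1) (t : K) :
    (1 - t • x) * ∑ k ∈ range n, (t • x) ^ k = (1 + t ^ n) • (1 : A) := by
  rw [mul_neg_geom_sum, smul_pow, hx, add_smul, one_smul, smul_neg, sub_neg_eq_add]

variable (x n) in
noncomputable def negacyclicResolvent (q : K) : A :=
  ∑ k ∈ range n, (q • x) ^ k - q ^ n • ∑ k ∈ range n, (q⁻¹ • x) ^ k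

theorem smul_one_sub_sub_mul_negacyclicResolvent (hx : x ^ n = -1) {y : A} (hy : y * x = 1)
    {q : K} (hq : q ≠ 0) :
    ((q + q⁻¹) • 1 - x - y) * negacyclicResolvent x n q = ((q⁻¹ - q) * (1 + q ^ n)) • 1 := by
  set a := q • x
  set b := q⁻¹ • x
  set c : K := 1 + q ^ n
  have hU : (1 - a) * ∑ k ∈ range n, a ^ k = c • 1 := one_sub_smul_mul_geom_sum_of_pow_eq_neg_one hx q
  have hV : (1 - b) * (q ^ n • ∑ k ∈ range n, b ^ k) = c • 1 := by
    rw [mul_smul_comm, one_sub_smul_mul_geom_sum_of_pow_eq_neg_one hx, smul_smul, mul_add,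
      inv_pow, mul_inv_cancel₀ (pow_ne_zero n hq), mul_one, add_comm]
  have hab : a * b = x * x := by
    rw [smul_mul_smul, mul_inv_cancel₀ hq, one_smul]
  have hW : (q + q⁻¹) • 1 - x - y = -(y * ((1 - a) * (1 - b))) := by
    have : (1 - a) * (1 - b) = 1 - a - b + a * b := by noncomm_ring
    rw [this, hab]
    simp only [a, b, mul_add, mul_sub, mul_one, mul_smul_comm, hy, ← mul_assoc, one_mul]
    module
  have hcomm : (1 - a) * (1 - b) = (1 - b) * (1 - a) :=
    ((Commute.one_left _).sub_left ((Commute.one_right a).sub_right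
      (((Commute.refl x).smul_left q).smul_right q⁻¹))).eq
  calc ((q + q⁻¹) • 1 - x - y) * negacyclicResolvent x n q
      = -(y * ((1 - b) * ((1 - a) * ∑ k ∈ range n, a ^ k)
          - (1 - a) * ((1 - b) * (q ^ n • ∑ k ∈ range n, b ^ k)))) := by
        rw [hW, negacyclicResolvent, neg_mul, mul_assoc, mul_sub, ← mul_assoc (1 - b),
          ← hcomm, mul_assoc, mul_assoc]
    _ = ((q⁻¹ - q) * c) • 1 := by
        rw [hU, hV]
        simp only [a, b, mul_sub, sub_mul, mul_smul_comm, mul_one, hy]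
        module

end Resolvent

section NegacyclicShift

variable {R : Type*} [Ring R] {n : ℕ}

variable (R n) in
def negacyclicShift : Matrix (Fin n) (Fin n) R :=
  of fun i j => if (j : ℕ) = i + 1 then 1 else if (j : ℕ) + n = i + 1 then -1 else 0

theorem negacyclicShift_pow_apply {k : ℕ} (hk : k ≤ n) (i j : Fin n) :
    (negacyclicShift R n ^ k) i j =
      if (j : ℕ) = i + k then 1 else if (j : ℕ) + n = i + k then -1 else 0 := by
  induction k generalizing i with
  | zero =>
    rw [pow_zero, one_apply]
    split_ifs <;> simp_all [Fin.ext_iff]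
    omega
  | succ k ih =>
    obtain ⟨l, hl⟩ : ∃ l : Fin n, (l : ℕ) = i + 1 ∨ (l : ℕ) + n = i + 1 := by
      by_cases h : (i : ℕ) + 1 < n
      · exact ⟨⟨i + 1, h⟩, Or.inl rfl⟩
      · exact ⟨⟨0, by omega⟩, Or.inr (by simp only; omega)⟩
    rw [pow_succ', mul_apply, Fintype.sum_eq_single l]
    · rw [ih (by omega)]
      simp only [negacyclicShift, of_apply]
      split_ifs <;> first | omega | simp
    · intro m hm
      have : ¬ ((m : ℕ) = i + 1 ∨ (m : ℕ) + n = i + 1) := fun h ↦ hm (by ext; omega)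
      simp only [negacyclicShift, of_apply]
      rw [if_neg (fun h ↦ this (Or.inl h)), if_neg (fun h ↦ this (Or.inr h)), zero_mul]

theorem negacyclicShift_pow_self : negacyclicShift R n ^ n = -1 := by
  ext i j
  rw [negacyclicShift_pow_apply le_rfl, neg_apply, one_apply]
  split_ifs <;> simp_all [Fin.ext_iff] <;> omega

theorem trace_negacyclicShift_pow {k : ℕ} (hk₀ : 0 < k) (hk : k < n) :
    (negacyclicShift R n ^ k).trace = 0 :=
  Finset.sum_eq_zero fun i _ ↦ by
    rw [diag_apply, negacyclicShift_pow_apply hk.le, if_neg (by omega), if_neg (by omega)]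

theorem transpose_negacyclicShift : (negacyclicShift R n)ᵀ = -negacyclicShift R n ^ (n - 1) := by
  ext i j
  rw [transpose_apply, neg_apply, negacyclicShift_pow_apply (Nat.sub_le n 1)]
  simp only [negacyclicShift, of_apply]
  split_ifs <;> first | omega | simp

theorem transpose_negacyclicShift_mul_self : (negacyclicShift R n)ᵀ * negacyclicShift R n = 1 := by
  rcases Nat.eq_zero_or_pos n with rfl | hn
  · exact Subsingleton.elim _ _
  · rw [transpose_negacyclicShift, neg_mul, ← pow_succ, Nat.sub_add_cancel hn,
      negacyclicShift_pow_self, neg_neg]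

end NegacyclicShift

theorem trace_sum_pow_smul_negacyclicShift {K : Type*} [Field K] {n : ℕ} (t : K) :
    (∑ k ∈ range n, (t • negacyclicShift K n) ^ k).trace = n := by
  rw [trace_sum, Finset.sum_eq_single 0]
  · simp
  · intro k hk hk₀
    rw [smul_pow, trace_smul, trace_negacyclicShift_pow (Nat.pos_of_ne_zero hk₀)
      (Finset.mem_range.mp hk), smul_zero]
  · intro h
    rw [Finset.mem_range, not_lt, Nat.le_zero] at h
    subst h
    simp

theorem trace_negacyclicResolvent {K : Type*} [Field K] {n : ℕ} (q : K) :
    (negacyclicResolvent (negacyclicShift K n) n q).trace = n * (1 - q ^ n) := by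
  rw [negacyclicResolvent, trace_sub, trace_smul, trace_sum_pow_smul_negacyclicShift,
    trace_sum_pow_smul_negacyclicShift, smul_eq_mul]
  ring

theorem LSnorm_eq_smul {n : ℕ} (hn : 3 ≤ n) :
    LSnorm n = (3⁻¹ : ℝ) • ((4 : ℝ) • 1 - negacyclicShift ℝ n - (negacyclicShift ℝ n)ᵀ) := by
  ext i j
  simp only [LSnorm, negacyclicShift, of_apply, Matrix.smul_apply, Matrix.sub_apply, one_apply,
    transpose_apply, Fin.ext_iff, smul_eq_mul]
  split_ifs <;> first | omega | norm_num

theorem posDef_LSnorm {n : ℕ} (hn : 3 ≤ n) : (LSnorm n).PosDef := by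
  set P := negacyclicShift ℝ n
  have h : (4 : ℝ) • 1 - P - Pᵀ = (2 : ℝ) • 1 + (1 - P)ᴴ * (1 - P) := by
    simp only [conjTranspose_eq_transpose_of_trivial, transpose_sub, transpose_one, sub_mul,
      mul_sub, transpose_negacyclicShift_mul_self, one_mul, mul_one, P]
    module
  rw [LSnorm_eq_smul hn, h]
  exact ((PosDef.one.smul two_pos).add_posSemidef (posSemidef_conjTranspose_mul_self _)).smul
    (by norm_num)

theorem LSnorm_mul_negacyclicResolvent {n : ℕ} (hn : 3 ≤ n) {q : ℝ} (hq : q + q⁻¹ = 4)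
    (hm : (q⁻¹ - q) * (1 + q ^ n) ≠ 0) :
    LSnorm n * ((3 / ((q⁻¹ - q) * (1 + q ^ n))) • negacyclicResolvent (negacyclicShift ℝ n) n q)
      = 1 := by
  have hq₀ : q ≠ 0 := by rintro rfl; norm_num at hq
  rw [LSnorm_eq_smul hn, ← hq, smul_mul_smul_comm,
    smul_one_sub_sub_mul_negacyclicResolvent negacyclicShift_pow_self
      transpose_negacyclicShift_mul_self hq₀, smul_smul]
  rw [show 3⁻¹ * (3 / ((q⁻¹ - q) * (1 + q ^ n))) * ((q⁻¹ - q) * (1 + q ^ n)) = 1 by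
    rw [mul_assoc, div_mul_cancel₀ _ hm, inv_mul_cancel₀ three_ne_zero],
    one_smul]

theorem inv_two_sub_sqrt_three : (2 - √3)⁻¹ = 2 + √3 := by
  refine inv_eq_of_mul_eq_one_right ?_
  rw [show (2 - √3) * (2 + √3) = 2 ^ 2 - √3 ^ 2 by ring, Real.sq_sqrt (by norm_num)]
  norm_num

theorem trace_inv_LSnorm {n : ℕ} (hn : 3 ≤ n) :
    (LSnorm n)⁻¹.trace = √3 * n / 2 * ((1 - (2 - √3) ^ n) / (1 + (2 - √3) ^ n)) := by
  have hq : (2 - √3)⁻¹ = 2 + √3 := inv_two_sub_sqrt_three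
  have hq₀ : 0 < 2 - √3 := sub_pos.2 ((Real.sqrt_lt' two_pos).2 (by norm_num))
  have hm : ((2 - √3)⁻¹ - (2 - √3)) * (1 + (2 - √3) ^ n) ≠ 0 := by
    rw [hq, add_sub_sub_cancel]
    positivity
  rw [inv_eq_right_inv (LSnorm_mul_negacyclicResolvent hn (by rw [hq]; ring) hm), trace_smul,
    trace_negacyclicResolvent, smul_eq_mul, hq, add_sub_sub_cancel]
  field_simp
  rw [Real.sq_sqrt (by norm_num)]
  ring

theorem stmt15 (n : ℕ) (hn : 3 ≤ n) (hL : (LSnorm n).IsHermitian) :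
    (∀ i, 0 < hL.eigenvalues i) ∧
      ∑ i, (hL.eigenvalues i)⁻¹ =
        Real.sqrt 3 * n / 2 *
          (((2 + Real.sqrt 3) ^ n - (2 - Real.sqrt 3) ^ n) /
            ((2 + Real.sqrt 3) ^ n + (2 - Real.sqrt 3) ^ n + 2)) := by
  have hpd := posDef_LSnorm hn
  refine ⟨hpd.eigenvalues_pos, ?_⟩
  have hXY : (2 + √3) ^ n * (2 - √3) ^ n = 1 := by
    rw [← mul_pow, show (2 + √3) * (2 - √3) = 2 ^ 2 - √3 ^ 2 by ring, Real.sq_sqrt (by norm_num)]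
    norm_num
  have hX : 1 + (2 + √3) ^ n ≠ 0 := by positivity
  calc ∑ i, (hL.eigenvalues i)⁻¹ = (LSnorm n)⁻¹.trace := (hL.trace_inv hpd.isUnit).symm
    _ = _ := by
      -- with `X = (2 + √3) ^ n`, `Y = (2 - √3) ^ n` and `X * Y = 1`: `(1 - Y) (1 + X) = X - Y`
      -- and `(1 + Y) (1 + X) = X + Y + 2`
      rw [trace_inv_LSnorm hn, ← mul_div_mul_right (1 - (2 - √3) ^ n) _ hX]
      congr 2
      · linear_combination -hXY
      · linear_combination hXY
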